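/- Let U be a finite set and for each u ∈ U let I_u be a finite index set, the I_u pairwise disjoint, with strictly positive weights ω : ⋃_{u∈U} I_u → (0,∞). Let y ∈ ℂ^I with I = ⋃_{u∈U} I_u and λ > 0. Define x* ∈ ℂ^I blockwise as follows: for u ∈ U with λ ≤ ‖( y_k / ω(k) )_{k∈I_u}‖_{W(u)}, choose ξ(u) > 0 satisfying ‖( y_k / (1/ξ(u) + ω(k)) )_{k∈I_u}‖_{W(u)} = λ and set (x*)_k = y_k / (1 + ξ(u)ω(k)) for k ∈ I_u; for u ∈ U with λ > ‖( y_k / ω(k) )_{k∈I_u}‖_{W(u)}, set (x*)_k = 0 for k ∈ I_u. Then x* is a minimizer of x ↦ (1/2)‖x − y‖₂² + λ Σ_{u∈U} ‖x_u‖_{W(u)} over ℂ^I. -/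

import Mathlib

/-!
The functional is convex, so it suffices that `y - x*` is a subgradient of the penalty
`λ Σ_u ‖·‖_{W(u)}` at `x*`, block by block: then
`½‖x - y‖² ≥ ½‖x* - y‖² - ⟪y - x*, x - x*⟫` and the subgradient inequality add up to the claim.
A vector `ω • v` is a subgradient of `λ‖·‖_W` at `z` as soon as `‖v‖_W ≤ λ` and
`Σ ω ⟪v, z⟫ = λ‖z‖_W`, by weighted Cauchy–Schwarz. On an active block `y - x* = ω • (ξ • x*)`,
and `ξ • x* = y / (1/ξ + ω)` has `W`-norm `λ`; on an inactive block `x* = 0` and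
`y - x* = ω • (y / ω)`, where `‖y / ω‖_W < λ`.
-/

open Finset RealInnerProductSpace

theorem Finset.sum_univ_eq_sum_sum_of_disjoint_of_cover {U κ M : Type*} [Fintype U] [Fintype κ]
    [AddCommMonoid M] (I : U → Finset κ) (hdisj : ∀ u v : U, u ≠ v → Disjoint (I u) (I v))
    (hcover : ∀ k : κ, ∃ u : U, k ∈ I u) (f : κ → M) :
    ∑ k, f k = ∑ u, ∑ k ∈ I u, f k := by
  have hpd : ((univ : Finset U) : Set U).PairwiseDisjoint I := fun u _ v _ huv => hdisj u v huv
  have hunion : univ.disjiUnion I hpd = univ :=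
    eq_univ_of_forall fun k => by simpa only [mem_disjiUnion, mem_univ, true_and] using hcover k
  rw [← hunion, sum_disjiUnion]

theorem norm_sub_sq_sub_two_inner_le {E : Type*} [NormedAddCommGroup E] [InnerProductSpace ℝ E]
    (x y z : E) : ‖z - y‖ ^ 2 - 2 * ⟪y - z, x - z⟫ ≤ ‖x - y‖ ^ 2 := by
  have hexp := norm_sub_sq_real (x - z) (y - z)
  rw [sub_sub_sub_cancel_right, real_inner_comm, norm_sub_rev y z] at hexp
  nlinarith [sq_nonneg ‖x - z‖]

section WeightedNorm

variable {ι E : Type*} [NormedAddCommGroup E] (s : Finset ι) (ω : ι → ℝ)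

noncomputable def weightedNorm (z : ι → E) : ℝ := √(∑ k ∈ s, ω k * ‖z k‖ ^ 2)

variable {s ω}

theorem weightedNorm_smul [NormedSpace ℝ E] {c : ℝ} (hc : 0 ≤ c) (z : ι → E) :
    weightedNorm s ω (c • z) = c * weightedNorm s ω z := by
  have hsum : ∑ k ∈ s, ω k * ‖(c • z) k‖ ^ 2 = c ^ 2 * ∑ k ∈ s, ω k * ‖z k‖ ^ 2 := by
    rw [mul_sum]
    refine sum_congr rfl fun k _ => ?_
    rw [Pi.smul_apply, norm_smul, Real.norm_of_nonneg hc]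
    ring
  rw [weightedNorm, weightedNorm, hsum, Real.sqrt_mul (sq_nonneg c), Real.sqrt_sq hc]

theorem weightedNorm_eq_zero_of_eqOn_zero {z : ι → E} (hz : ∀ k ∈ s, z k = 0) :
    weightedNorm s ω z = 0 := by
  rw [weightedNorm, sum_eq_zero fun k hk => by simp [hz k hk], Real.sqrt_zero]

variable [InnerProductSpace ℝ E]

theorem sum_mul_inner_le_weightedNorm_mul (hω : ∀ k ∈ s, 0 ≤ ω k) (a b : ι → E) :
    ∑ k ∈ s, ω k * ⟪a k, b k⟫ ≤ weightedNorm s ω a * weightedNorm s ω b := by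
  have hsq : ∀ z : ι → E, ∑ k ∈ s, (√(ω k) * ‖z k‖) ^ 2 = ∑ k ∈ s, ω k * ‖z k‖ ^ 2 :=
    fun z => sum_congr rfl fun k hk => by rw [mul_pow, Real.sq_sqrt (hω k hk)]
  calc ∑ k ∈ s, ω k * ⟪a k, b k⟫
      ≤ ∑ k ∈ s, (√(ω k) * ‖a k‖) * (√(ω k) * ‖b k‖) := by
        refine sum_le_sum fun k hk => ?_
        rw [mul_mul_mul_comm, Real.mul_self_sqrt (hω k hk)]
        exact mul_le_mul_of_nonneg_left (real_inner_le_norm _ _) (hω k hk)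
    _ ≤ weightedNorm s ω a * weightedNorm s ω b := by
        rw [weightedNorm, weightedNorm, ← hsq a, ← hsq b]
        exact Real.sum_mul_le_sqrt_mul_sqrt _ _ _

theorem sum_mul_inner_self_eq_weightedNorm_sq (hω : ∀ k ∈ s, 0 ≤ ω k) (z : ι → E) :
    ∑ k ∈ s, ω k * ⟪z k, z k⟫ = weightedNorm s ω z ^ 2 := by
  rw [weightedNorm, Real.sq_sqrt (sum_nonneg fun k hk => mul_nonneg (hω k hk) (sq_nonneg _))]
  simp only [real_inner_self_eq_norm_sq]

theorem weightedNorm_subgradient_ineq (hω : ∀ k ∈ s, 0 ≤ ω k) {lam : ℝ} {v z : ι → E}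
    (hv : weightedNorm s ω v ≤ lam) (hvz : ∑ k ∈ s, ω k * ⟪v k, z k⟫ = lam * weightedNorm s ω z)
    (x : ι → E) :
    lam * weightedNorm s ω z + ∑ k ∈ s, ω k * ⟪v k, x k - z k⟫ ≤ lam * weightedNorm s ω x := by
  simp only [inner_sub_right, mul_sub, sum_sub_distrib, hvz, add_sub_cancel]
  calc ∑ k ∈ s, ω k * ⟪v k, x k⟫
      ≤ weightedNorm s ω v * weightedNorm s ω x := sum_mul_inner_le_weightedNorm_mul hω v x
    _ ≤ lam * weightedNorm s ω x :=
        mul_le_mul_of_nonneg_right hv (Real.sqrt_nonneg _)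

end WeightedNorm

section GroupLassoBlock

variable {ι : Type*} {s : Finset ι} {ω : ι → ℝ} {y z : ι → ℂ} {lam : ℝ}

theorem groupLasso_active_block_ineq (hω : ∀ k ∈ s, 0 < ω k) {ξ : ℝ} (hξ : 0 < ξ)
    (hnorm : √(∑ k ∈ s, ω k * ‖y k / ((1 / ξ + ω k : ℝ) : ℂ)‖ ^ 2) = lam)
    (hz : ∀ k ∈ s, z k = y k / ((1 + ξ * ω k : ℝ) : ℂ)) (x : ι → ℂ) :
    lam * weightedNorm s ω z + ∑ k ∈ s, ⟪y k - z k, x k - z k⟫ ≤ lam * weightedNorm s ω x := by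
  have hω' : ∀ k ∈ s, 0 ≤ ω k := fun k hk => (hω k hk).le
  have hden : ∀ k ∈ s, (1 + ξ * ω k : ℂ) ≠ 0 := fun k hk => by
    exact_mod_cast (by nlinarith [hω k hk] : (1 + ξ * ω k : ℝ) ≠ 0)
  have hres : ∀ k ∈ s, y k - z k = ω k • (ξ • z) k := fun k hk => by
    rw [Pi.smul_apply, Complex.real_smul, Complex.real_smul, hz k hk]
    push_cast
    field_simp [hden k hk]
    ring
  have hscaled : ∀ k ∈ s, y k / ((1 / ξ + ω k : ℝ) : ℂ) = (ξ • z) k := fun k hk => by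
    rw [Pi.smul_apply, Complex.real_smul, hz k hk]
    push_cast
    field_simp [hden k hk, hξ.ne']
  have hv : weightedNorm s ω (ξ • z) = lam := by
    rw [← hnorm, weightedNorm]
    exact congrArg _ (sum_congr rfl fun k hk => by rw [hscaled k hk])
  have hvz : ∑ k ∈ s, ω k * ⟪(ξ • z) k, z k⟫ = lam * weightedNorm s ω z := by
    simp only [Pi.smul_apply, real_inner_smul_left, mul_left_comm (ω _) ξ, ← mul_sum]
    rw [sum_mul_inner_self_eq_weightedNorm_sq hω', ← hv, weightedNorm_smul hξ.le]
    ring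
  have hinner : ∑ k ∈ s, ⟪y k - z k, x k - z k⟫ = ∑ k ∈ s, ω k * ⟪(ξ • z) k, x k - z k⟫ :=
    sum_congr rfl fun k hk => by rw [hres k hk, real_inner_smul_left]
  rw [hinner]
  exact weightedNorm_subgradient_ineq hω' hv.le hvz x

theorem groupLasso_inactive_block_ineq (hω : ∀ k ∈ s, 0 < ω k)
    (hy : √(∑ k ∈ s, ω k * ‖y k / ((ω k : ℝ) : ℂ)‖ ^ 2) ≤ lam) (hz : ∀ k ∈ s, z k = 0)
    (x : ι → ℂ) :
    lam * weightedNorm s ω z + ∑ k ∈ s, ⟪y k - z k, x k - z k⟫ ≤ lam * weightedNorm s ω x := by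
  set v : ι → ℂ := fun k => (ω k)⁻¹ • y k
  have hres : ∀ k ∈ s, y k - z k = ω k • v k := fun k hk => by
    rw [hz k hk, sub_zero, smul_inv_smul₀ (hω k hk).ne']
  have hv : weightedNorm s ω v ≤ lam := by
    refine le_of_eq_of_le ?_ hy
    simp only [weightedNorm, v, Complex.real_smul, div_eq_inv_mul, Complex.ofReal_inv]
  have hvz : ∑ k ∈ s, ω k * ⟪v k, z k⟫ = lam * weightedNorm s ω z := by
    rw [weightedNorm_eq_zero_of_eqOn_zero hz, mul_zero]
    exact sum_eq_zero fun k hk => by rw [hz k hk, inner_zero_right, mul_zero]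
  have hinner : ∑ k ∈ s, ⟪y k - z k, x k - z k⟫ = ∑ k ∈ s, ω k * ⟪v k, x k - z k⟫ :=
    sum_congr rfl fun k hk => by rw [hres k hk, real_inner_smul_left]
  rw [hinner]
  exact weightedNorm_subgradient_ineq (fun k hk => (hω k hk).le) hv hvz x

end GroupLassoBlock

theorem groupLasso_explicit_minimizer_general {U : Type*} {κ : Type*} [Fintype U]
    [Fintype κ]
    (I : U → Finset κ)
    (hdisj : ∀ u v : U, u ≠ v → Disjoint (I u) (I v))
    (hcover : ∀ k : κ, ∃ u : U, k ∈ I u)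
    (ω : κ → ℝ) (hω : ∀ k, 0 < ω k)
    (y : κ → ℂ) (lam : ℝ)
    (ξ : U → ℝ) (xstar : κ → ℂ)
    (hactive : ∀ u : U,
      lam ≤ Real.sqrt (∑ k ∈ I u, ω k * ‖y k / ((ω k : ℝ) : ℂ)‖ ^ 2) →
        0 < ξ u
        ∧ Real.sqrt (∑ k ∈ I u, ω k *
            ‖y k / ((1 / ξ u + ω k : ℝ) : ℂ)‖ ^ 2) = lam
        ∧ ∀ k ∈ I u, xstar k = y k / ((1 + ξ u * ω k : ℝ) : ℂ))
    (hinactive : ∀ u : U,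
      Real.sqrt (∑ k ∈ I u, ω k * ‖y k / ((ω k : ℝ) : ℂ)‖ ^ 2) < lam →
        ∀ k ∈ I u, xstar k = 0) :
    ∀ x : κ → ℂ,
      (1 / 2) * ∑ k, ‖xstar k - y k‖ ^ 2
          + lam * ∑ u : U, Real.sqrt (∑ k ∈ I u, ω k * ‖xstar k‖ ^ 2)
        ≤ (1 / 2) * ∑ k, ‖x k - y k‖ ^ 2
          + lam * ∑ u : U, Real.sqrt (∑ k ∈ I u, ω k * ‖x k‖ ^ 2) := by
  intro x
  change (1 / 2) * ∑ k, ‖xstar k - y k‖ ^ 2 + lam * ∑ u, weightedNorm (I u) ω xstar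
    ≤ (1 / 2) * ∑ k, ‖x k - y k‖ ^ 2 + lam * ∑ u, weightedNorm (I u) ω x
  have hblock : ∀ u, lam * weightedNorm (I u) ω xstar + ∑ k ∈ I u, ⟪y k - xstar k, x k - xstar k⟫
      ≤ lam * weightedNorm (I u) ω x := fun u => by
    rcases le_or_gt lam (√(∑ k ∈ I u, ω k * ‖y k / ((ω k : ℝ) : ℂ)‖ ^ 2)) with hle | hlt
    · obtain ⟨hξ, hnorm, hxstar⟩ := hactive u hle
      exact groupLasso_active_block_ineq (fun k _ => hω k) hξ hnorm hxstar x
    · exact groupLasso_inactive_block_ineq (fun k _ => hω k) hlt.le (hinactive u hlt) x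
  have hpenalty := sum_le_sum fun u (_ : u ∈ univ) => hblock u
  have hquadratic := sum_le_sum fun k (_ : k ∈ univ) =>
    norm_sub_sq_sub_two_inner_le (x k) (y k) (xstar k)
  rw [sum_add_distrib, ← sum_univ_eq_sum_sum_of_disjoint_of_cover I hdisj hcover, ← mul_sum,
    ← mul_sum] at hpenalty
  rw [sum_sub_distrib, ← mul_sum] at hquadratic
  linarith

/-- Explicit blockwise solution of the group lasso problem: with pairwise
disjoint groups `I_u` covering the index set, strictly positive weights `ω` and
`λ > 0`, define `x*` blockwise by `x*_k = y_k / (1 + ξ(u)ω(k))` on active groups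
(those with `λ ≤ ‖(y_k/ω(k))_{k∈I_u}‖_{W(u)}`), where `ξ(u) > 0` solves
`‖( y_k / (1/ξ(u) + ω(k)) )_{k∈I_u}‖_{W(u)} = λ`, and by `x*_k = 0` on inactive
groups. Then `x*` minimizes the group lasso functional
`x ↦ (1/2)‖x - y‖₂² + λ Σ_{u∈U} ‖x_u‖_{W(u)}`. -/
theorem groupLasso_explicit_minimizer {U : Type*} {κ : Type*} [Fintype U]
    [Fintype κ] [DecidableEq κ]
    (I : U → Finset κ)
    (hdisj : ∀ u v : U, u ≠ v → Disjoint (I u) (I v))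
    (hcover : ∀ k : κ, ∃ u : U, k ∈ I u)
    (ω : κ → ℝ) (hω : ∀ k, 0 < ω k)
    (y : κ → ℂ) (lam : ℝ) (hlam : 0 < lam)
    (ξ : U → ℝ) (xstar : κ → ℂ)
    (hactive : ∀ u : U,
      lam ≤ Real.sqrt (∑ k ∈ I u, ω k * ‖y k / ((ω k : ℝ) : ℂ)‖ ^ 2) →
        0 < ξ u
        ∧ Real.sqrt (∑ k ∈ I u, ω k *
            ‖y k / ((1 / ξ u + ω k : ℝ) : ℂ)‖ ^ 2) = lam
        ∧ ∀ k ∈ I u, xstar k = y k / ((1 + ξ u * ω k : ℝ) : ℂ))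
    (hinactive : ∀ u : U,
      Real.sqrt (∑ k ∈ I u, ω k * ‖y k / ((ω k : ℝ) : ℂ)‖ ^ 2) < lam →
        ∀ k ∈ I u, xstar k = 0) :
    ∀ x : κ → ℂ,
      (1 / 2) * ∑ k, ‖xstar k - y k‖ ^ 2
          + lam * ∑ u : U, Real.sqrt (∑ k ∈ I u, ω k * ‖xstar k‖ ^ 2)
        ≤ (1 / 2) * ∑ k, ‖x k - y k‖ ^ 2
          + lam * ∑ u : U, Real.sqrt (∑ k ∈ I u, ω k * ‖x k‖ ^ 2) :=
  groupLasso_explicit_minimizer_general I hdisj hcover ω hω y lam ξ xstar hactive hinactive
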